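/- Let H : ℝ^{m×n} × ℝ^{m×n} → ℝ be continuously differentiable with Frobenius gradients (∇_Q H, ∇_P H). Let Û ∈ ℂ^{m×k}, V̂ ∈ ℂ^{n×k} satisfy Û*Û = I_k, V̂*V̂ = I_k, and let S : ℝ → ℂ^{k×k} be differentiable on [t0, t1] satisfying, with Ẑ(t) = Û S(t) V̂*, Q(t) = Re Ẑ(t), P(t) = Im Ẑ(t), the equation S'(t) = −i Û* (∇_Q H(Q(t),P(t)) + i ∇_P H(Q(t),P(t))) V̂. Suppose Ẑ(t0) = Q0 + i P0, set Ẑ1 = Ẑ(t1) = Q̂1 + i P̂1, and let Z1 = Q1 + i P1 ∈ ℂ^{m×n} satisfy ‖Z1 − Ẑ1‖_F ≤ ϑ. Then |H(Q1, P1) − H(Q0, P0)| ≤ β ϑ, where β = max_{τ ∈ [0,1]} ‖( ∇_Q H, ∇_P H )(τ Q1 + (1−τ) Q̂1, τ P1 + (1−τ) P̂1)‖_F. -/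

import Mathlib

open Matrix

attribute [local instance] Matrix.frobeniusSeminormedAddCommGroup
  Matrix.frobeniusNormedAddCommGroup Matrix.frobeniusNormedSpace

/-- The Frobenius inner product `⟨A, B⟩_F = trace(Aᵀ B)`. -/
noncomputable def frobInner {m n : ℕ} (A B : Matrix (Fin m) (Fin n) ℝ) : ℝ :=
  (Aᵀ * B).trace

/-- The real Frobenius norm. -/
noncomputable def frobNorm {m n : ℕ} (A : Matrix (Fin m) (Fin n) ℝ) : ℝ :=
  Real.sqrt (frobInner A A)

/-- The complex Frobenius norm. -/
noncomputable def cfrobNorm {m n : ℕ} (A : Matrix (Fin m) (Fin n) ℂ) : ℝ :=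
  Real.sqrt ((Aᴴ * A).trace.re)

/-! With `G = ∇_Q H + i ∇_P H`, the Galerkin flow `Ṡ = -i Ûᴴ G V̂` is tangent to the level sets
of `H`: along it `dH/dt` is the real part of `-i ‖Ûᴴ G V̂‖_F²`, which vanishes, so
`H(Q̂₁, P̂₁) = H(Q₀, P₀)`. The truncation step then moves `(Q̂₁, P̂₁)` to `(Q₁, P₁)` by at most `ϑ`
in the Frobenius norm, and the mean value theorem along the segment joining them, with
Cauchy–Schwarz, bounds the change of `H` by `β ϑ`. -/

section Frobenius

variable {m n : ℕ}

noncomputable def frobNormPair (XY : Matrix (Fin m) (Fin n) ℝ × Matrix (Fin m) (Fin n) ℝ) : ℝ :=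
  Real.sqrt (frobNorm XY.1 ^ 2 + frobNorm XY.2 ^ 2)

lemma frobInner_eq_sum (A B : Matrix (Fin m) (Fin n) ℝ) :
    frobInner A B = ∑ j, ∑ i, A i j * B i j := by
  simp [frobInner, Matrix.trace, Matrix.mul_apply, Matrix.diag]

lemma frobInner_self_nonneg (A : Matrix (Fin m) (Fin n) ℝ) : 0 ≤ frobInner A A := by
  rw [frobInner_eq_sum]
  exact Finset.sum_nonneg fun j _ => Finset.sum_nonneg fun i _ => mul_self_nonneg _

lemma frobNorm_sq (A : Matrix (Fin m) (Fin n) ℝ) : frobNorm A ^ 2 = frobInner A A :=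
  Real.sq_sqrt (frobInner_self_nonneg A)

lemma abs_frobInner_le (A B : Matrix (Fin m) (Fin n) ℝ) :
    |frobInner A B| ≤ frobNorm A * frobNorm B := by
  rw [frobNorm, frobNorm, ← Real.sqrt_mul (frobInner_self_nonneg A)]
  apply Real.abs_le_sqrt
  have h := Finset.sum_mul_sq_le_sq_mul_sq Finset.univ
    (fun p : Fin n × Fin m => A p.2 p.1) (fun p : Fin n × Fin m => B p.2 p.1)
  simpa [frobInner_eq_sum, Fintype.sum_prod_type, sq] using h

lemma abs_mul_add_mul_le_sqrt_mul_sqrt (a b c d : ℝ) :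
    |a * b + c * d| ≤ Real.sqrt (a ^ 2 + c ^ 2) * Real.sqrt (b ^ 2 + d ^ 2) := by
  rw [← Real.sqrt_mul (by positivity)]
  exact Real.abs_le_sqrt (by nlinarith [sq_nonneg (a * d - c * b)])

lemma abs_frobInner_add_frobInner_le (A B X Y : Matrix (Fin m) (Fin n) ℝ) :
    |frobInner A X + frobInner B Y| ≤ frobNormPair (A, B) * frobNormPair (X, Y) :=
  calc |frobInner A X + frobInner B Y|
      ≤ |frobInner A X| + |frobInner B Y| := abs_add_le _ _
    _ ≤ frobNorm A * frobNorm X + frobNorm B * frobNorm Y :=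
      add_le_add (abs_frobInner_le A X) (abs_frobInner_le B Y)
    _ ≤ frobNormPair (A, B) * frobNormPair (X, Y) :=
      (le_abs_self _).trans (abs_mul_add_mul_le_sqrt_mul_sqrt _ _ _ _)

lemma continuous_frobNorm : Continuous (frobNorm : Matrix (Fin m) (Fin n) ℝ → ℝ) := by
  unfold frobNorm
  simp only [frobInner_eq_sum]
  fun_prop

lemma continuous_frobNormPair :
    Continuous (frobNormPair : Matrix (Fin m) (Fin n) ℝ × Matrix (Fin m) (Fin n) ℝ → ℝ) :=
  Real.continuous_sqrt.comp
    (((continuous_frobNorm.comp continuous_fst).pow 2).add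
      ((continuous_frobNorm.comp continuous_snd).pow 2))

end Frobenius

section RealImaginaryParts

variable {m n : ℕ}

noncomputable def ofReIm (X Y : Matrix (Fin m) (Fin n) ℝ) : Matrix (Fin m) (Fin n) ℂ :=
  X.map Complex.ofReal + Complex.I • Y.map Complex.ofReal

def reIm (Z : Matrix (Fin m) (Fin n) ℂ) : Matrix (Fin m) (Fin n) ℝ × Matrix (Fin m) (Fin n) ℝ :=
  (Z.map Complex.re, Z.map Complex.im)

lemma reIm_ofReIm (X Y : Matrix (Fin m) (Fin n) ℝ) : reIm (ofReIm X Y) = (X, Y) := by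
  ext i j <;> simp [reIm, ofReIm]

lemma reIm_sub (Z W : Matrix (Fin m) (Fin n) ℂ) : reIm (Z - W) = reIm Z - reIm W := by
  ext i j <;> simp [reIm]

lemma cfrobNorm_eq_frobNormPair_reIm (Z : Matrix (Fin m) (Fin n) ℂ) :
    cfrobNorm Z = frobNormPair (reIm Z) := by
  rw [cfrobNorm, frobNormPair, frobNorm_sq, frobNorm_sq]
  congr 1
  simp only [reIm, frobInner_eq_sum, Matrix.trace, Matrix.mul_apply, Matrix.diag,
    Matrix.conjTranspose_apply, Matrix.map_apply, Complex.re_sum, ← Finset.sum_add_distrib]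
  refine Finset.sum_congr rfl fun j _ => Finset.sum_congr rfl fun i _ => ?_
  simp [Complex.mul_re]

lemma frobInner_add_frobInner_reIm (A B : Matrix (Fin m) (Fin n) ℝ)
    (Z : Matrix (Fin m) (Fin n) ℂ) :
    frobInner A (reIm Z).1 + frobInner B (reIm Z).2 = ((ofReIm A B)ᴴ * Z).trace.re := by
  simp only [reIm, ofReIm, frobInner_eq_sum, Matrix.trace, Matrix.mul_apply, Matrix.diag,
    Matrix.conjTranspose_apply, Matrix.map_apply, Matrix.add_apply, Matrix.smul_apply,
    Complex.re_sum, ← Finset.sum_add_distrib]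
  refine Finset.sum_congr rfl fun j _ => Finset.sum_congr rfl fun i _ => ?_
  simp [Complex.mul_re, smul_eq_mul]

end RealImaginaryParts

section Galerkin

variable {m n k : ℕ}

lemma im_trace_conjTranspose_mul_self (A : Matrix (Fin m) (Fin n) ℂ) :
    (Aᴴ * A).trace.im = 0 := by
  simp only [Matrix.trace, Matrix.mul_apply, Matrix.diag, Matrix.conjTranspose_apply,
    Complex.im_sum]
  refine Finset.sum_eq_zero fun j _ => Finset.sum_eq_zero fun i _ => ?_
  simp only [Complex.mul_im, RCLike.star_def, Complex.conj_re, Complex.conj_im]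
  ring

lemma trace_conjTranspose_mul_mul_mul_conjTranspose (G : Matrix (Fin m) (Fin n) ℂ)
    (U : Matrix (Fin m) (Fin k) ℂ) (V : Matrix (Fin n) (Fin k) ℂ) (A : Matrix (Fin k) (Fin k) ℂ) :
    (Gᴴ * (U * A * Vᴴ)).trace = ((Uᴴ * G * V)ᴴ * A).trace := by
  rw [← Matrix.mul_assoc, ← Matrix.mul_assoc, Matrix.trace_mul_comm]
  simp only [Matrix.conjTranspose_mul, Matrix.conjTranspose_conjTranspose, Matrix.mul_assoc]

lemma re_trace_conjTranspose_mul_galerkin_eq_zero (G : Matrix (Fin m) (Fin n) ℂ)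
    (U : Matrix (Fin m) (Fin k) ℂ) (V : Matrix (Fin n) (Fin k) ℂ) :
    (Gᴴ * (U * ((-Complex.I) • (Uᴴ * G * V)) * Vᴴ)).trace.re = 0 := by
  rw [trace_conjTranspose_mul_mul_mul_conjTranspose, Matrix.mul_smul, Matrix.trace_smul,
    smul_eq_mul, Complex.mul_re, im_trace_conjTranspose_mul_self]
  simp

lemma hasDerivAt_reIm_mul_mul_conjTranspose (U : Matrix (Fin m) (Fin k) ℂ)
    (V : Matrix (Fin n) (Fin k) ℂ) {S : ℝ → Matrix (Fin k) (Fin k) ℂ}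
    {S' : Matrix (Fin k) (Fin k) ℂ} {t : ℝ}
    (hS : ∀ a b, HasDerivAt (fun s => S s a b) (S' a b) t) :
    HasDerivAt (fun s => reIm (U * S s * Vᴴ)) (reIm (U * S' * Vᴴ)) t := by
  have hZ : ∀ i j, HasDerivAt (fun s => (U * S s * Vᴴ) i j) ((U * S' * Vᴴ) i j) t := by
    intro i j
    simp only [Matrix.mul_apply, Finset.sum_mul]
    exact HasDerivAt.fun_sum fun b _ => HasDerivAt.fun_sum fun a _ =>
      ((hS a b).const_mul (U i a)).mul_const (Vᴴ b j)
  exact (hasDerivAt_pi.2 fun i => hasDerivAt_pi.2 fun j =>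
      Complex.reCLM.hasFDerivAt.comp_hasDerivAt t (hZ i j)).prodMk
    (hasDerivAt_pi.2 fun i => hasDerivAt_pi.2 fun j =>
      Complex.imCLM.hasFDerivAt.comp_hasDerivAt t (hZ i j))

theorem hamiltonian_galerkin_flow_conserved
    {H : Matrix (Fin m) (Fin n) ℝ × Matrix (Fin m) (Fin n) ℝ → ℝ}
    {GQ GP : Matrix (Fin m) (Fin n) ℝ × Matrix (Fin m) (Fin n) ℝ → Matrix (Fin m) (Fin n) ℝ}
    (hH : Differentiable ℝ H)
    (hgrad : ∀ QP X Y, fderiv ℝ H QP (X, Y) = frobInner (GQ QP) X + frobInner (GP QP) Y)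
    (U : Matrix (Fin m) (Fin k) ℂ) (V : Matrix (Fin n) (Fin k) ℂ)
    {S : ℝ → Matrix (Fin k) (Fin k) ℂ} {t0 t1 : ℝ} (ht : t0 ≤ t1)
    (hS : ∀ t ∈ Set.Icc t0 t1, ∀ a b, HasDerivAt (fun s => S s a b)
      (((-Complex.I) • (Uᴴ * ofReIm (GQ (reIm (U * S t * Vᴴ))) (GP (reIm (U * S t * Vᴴ)))
        * V)) a b) t) :
    H (reIm (U * S t1 * Vᴴ)) = H (reIm (U * S t0 * Vᴴ)) := by
  have hderiv : ∀ t ∈ Set.Icc t0 t1, HasDerivAt (fun s => H (reIm (U * S s * Vᴴ))) 0 t := by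
    intro t htt
    have htangent := (hH _).hasFDerivAt.comp_hasDerivAt t
      (hasDerivAt_reIm_mul_mul_conjTranspose U V (hS t htt))
    exact htangent.congr_deriv <| (hgrad _ _ _).trans <|
      (frobInner_add_frobInner_reIm _ _ _).trans <|
        re_trace_conjTranspose_mul_galerkin_eq_zero _ U V
  exact constant_of_has_deriv_right_zero
    (fun t ht => (hderiv t ht).continuousAt.continuousWithinAt)
    (fun t ht => (hderiv t (Set.mem_Icc_of_Ico ht)).hasDerivWithinAt) t1
    (Set.right_mem_Icc.2 ht)

end Galerkin

section MeanValue

lemma le_iSup_Icc_of_continuous {g : ℝ → ℝ} (hg : Continuous g) {a b τ : ℝ}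
    (hτ : τ ∈ Set.Icc a b) : g τ ≤ ⨆ s : Set.Icc a b, g s :=
  le_ciSup (isCompact_range (hg.comp continuous_subtype_val)).bddAbove ⟨τ, hτ⟩

variable {E : Type*} [NormedAddCommGroup E] [NormedSpace ℝ E]

lemma hasDerivAt_segment (x y : E) (τ : ℝ) :
    HasDerivAt (fun τ : ℝ => τ • y + (1 - τ) • x) (y - x) τ :=
  (((hasDerivAt_id τ).smul_const y).fun_add
    (((hasDerivAt_id τ).const_sub 1).smul_const x)).congr_deriv (by simp [sub_eq_add_neg])

lemma abs_sub_le_of_abs_fderiv_segment_le {f : E → ℝ} (hf : Differentiable ℝ f) {x y : E} {C : ℝ}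
    (hC : ∀ τ ∈ Set.Icc (0 : ℝ) 1, |fderiv ℝ f (τ • y + (1 - τ) • x) (y - x)| ≤ C) :
    |f y - f x| ≤ C := by
  have hMVT := (convex_Icc (0 : ℝ) 1).norm_image_sub_le_of_norm_hasDerivWithin_le
    (f := fun τ : ℝ => f (τ • y + (1 - τ) • x))
    (fun τ _ =>
      ((hf _).hasFDerivAt.comp_hasDerivAt τ (hasDerivAt_segment x y τ)).hasDerivWithinAt)
    hC (Set.left_mem_Icc.2 zero_le_one) (Set.right_mem_Icc.2 zero_le_one)
  simpa using hMVT

end MeanValue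

theorem rank_adaptive_hamiltonian_preservation_general
    {m n k : ℕ} {t0 t1 ϑ : ℝ}
    (H : Matrix (Fin m) (Fin n) ℝ × Matrix (Fin m) (Fin n) ℝ → ℝ)
    (GQ GP : Matrix (Fin m) (Fin n) ℝ × Matrix (Fin m) (Fin n) ℝ → Matrix (Fin m) (Fin n) ℝ)
    (hH : Differentiable ℝ H)
    (hGQ : Continuous GQ) (hGP : Continuous GP)
    (hgrad : ∀ QP : Matrix (Fin m) (Fin n) ℝ × Matrix (Fin m) (Fin n) ℝ,
      ∀ X Y : Matrix (Fin m) (Fin n) ℝ,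
        fderiv ℝ H QP (X, Y) = frobInner (GQ QP) X + frobInner (GP QP) Y)
    (Uhat : Matrix (Fin m) (Fin k) ℂ) (Vhat : Matrix (Fin n) (Fin k) ℂ)
    (S : ℝ → Matrix (Fin k) (Fin k) ℂ)
    (Q P : ℝ → Matrix (Fin m) (Fin n) ℝ)
    (hQ : ∀ t, Q t = (Uhat * S t * Vhatᴴ).map Complex.re)
    (hP : ∀ t, P t = (Uhat * S t * Vhatᴴ).map Complex.im)
    (ht : t0 ≤ t1)
    (hS : ∀ t ∈ Set.Icc t0 t1, ∀ i j,
      HasDerivAt (fun s => S s i j)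
        (((-Complex.I) • (Uhatᴴ *
          ((GQ (Q t, P t)).map Complex.ofReal
            + Complex.I • (GP (Q t, P t)).map Complex.ofReal) * Vhat)) i j) t)
    (Q0 P0 Q1 P1 Qhat1 Phat1 : Matrix (Fin m) (Fin n) ℝ)
    (Z1 Zhat1 : Matrix (Fin m) (Fin n) ℂ)
    (hZ0 : Uhat * S t0 * Vhatᴴ
      = Q0.map Complex.ofReal + Complex.I • P0.map Complex.ofReal)
    (hZhat1 : Zhat1 = Uhat * S t1 * Vhatᴴ)
    (hQhat1 : Qhat1 = Zhat1.map Complex.re) (hPhat1 : Phat1 = Zhat1.map Complex.im)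
    (hZ1 : Z1 = Q1.map Complex.ofReal + Complex.I • P1.map Complex.ofReal)
    (htrunc : cfrobNorm (Z1 - Zhat1) ≤ ϑ)
    (β : ℝ)
    (hβ : β = ⨆ τ : Set.Icc (0:ℝ) 1,
      Real.sqrt
        (frobNorm (GQ ((τ : ℝ) • Q1 + (1 - (τ : ℝ)) • Qhat1,
            (τ : ℝ) • P1 + (1 - (τ : ℝ)) • Phat1)) ^ 2
          + frobNorm (GP ((τ : ℝ) • Q1 + (1 - (τ : ℝ)) • Qhat1,
            (τ : ℝ) • P1 + (1 - (τ : ℝ)) • Phat1)) ^ 2)) :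
    |H (Q1, P1) - H (Q0, P0)| ≤ β * ϑ := by
  have hQP : ∀ t, (Q t, P t) = reIm (Uhat * S t * Vhatᴴ) := fun t => by rw [hQ, hP]; rfl
  have hZ0' : Uhat * S t0 * Vhatᴴ = ofReIm Q0 P0 := hZ0
  have hZ1' : Z1 = ofReIm Q1 P1 := hZ1
  have hZhat1' : reIm Zhat1 = (Qhat1, Phat1) := by rw [hQhat1, hPhat1]; rfl
  have hconserved : H (Qhat1, Phat1) = H (Q0, P0) := by
    have h := hamiltonian_galerkin_flow_conserved hH hgrad Uhat Vhat ht
      fun t htt => by rw [← hQP]; exact hS t htt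
    rwa [← hZhat1, hZhat1', hZ0', reIm_ofReIm] at h
  have hstep : frobNormPair (Q1 - Qhat1, P1 - Phat1) ≤ ϑ := by
    rwa [cfrobNorm_eq_frobNormPair_reIm, reIm_sub, hZ1', hZhat1', reIm_ofReIm] at htrunc
  have hβ_bound : ∀ τ ∈ Set.Icc (0 : ℝ) 1, frobNormPair
      (GQ (τ • (Q1, P1) + (1 - τ) • (Qhat1, Phat1)),
        GP (τ • (Q1, P1) + (1 - τ) • (Qhat1, Phat1))) ≤ β := by
    intro τ hτ
    rw [hβ]
    exact le_iSup_Icc_of_continuous (g := fun τ : ℝ => frobNormPair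
      (GQ (τ • (Q1, P1) + (1 - τ) • (Qhat1, Phat1)),
        GP (τ • (Q1, P1) + (1 - τ) • (Qhat1, Phat1))))
      (continuous_frobNormPair.comp (by fun_prop)) hτ
  have hβ_nonneg : 0 ≤ β := (Real.sqrt_nonneg _).trans (hβ_bound 0 (Set.left_mem_Icc.2 zero_le_one))
  rw [← hconserved]
  refine abs_sub_le_of_abs_fderiv_segment_le (x := (Qhat1, Phat1)) (y := (Q1, P1)) hH
    fun τ hτ => ?_
  refine (congrArg abs (hgrad _ (Q1 - Qhat1) (P1 - Phat1))).trans_le ?_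
  exact (abs_frobInner_add_frobInner_le _ _ _ _).trans <|
    mul_le_mul (hβ_bound τ hτ) hstep (Real.sqrt_nonneg _) hβ_nonneg

/-- Theorem of Section 3.5: one step of the rank-adaptive integrator applied to the
Schrödinger-form reformulation `i Ż = ∇_Q H + i ∇_P H` of a Hamiltonian system preserves
the Hamiltonian up to `β ϑ`. -/
theorem rank_adaptive_hamiltonian_preservation
    {m n k : ℕ} {t0 t1 ϑ : ℝ}
    (H : Matrix (Fin m) (Fin n) ℝ × Matrix (Fin m) (Fin n) ℝ → ℝ)
    (GQ GP : Matrix (Fin m) (Fin n) ℝ × Matrix (Fin m) (Fin n) ℝ → Matrix (Fin m) (Fin n) ℝ)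
    (hH : Differentiable ℝ H)
    (hGQ : Continuous GQ) (hGP : Continuous GP)
    (hgrad : ∀ QP : Matrix (Fin m) (Fin n) ℝ × Matrix (Fin m) (Fin n) ℝ,
      ∀ X Y : Matrix (Fin m) (Fin n) ℝ,
        fderiv ℝ H QP (X, Y) = frobInner (GQ QP) X + frobInner (GP QP) Y)
    (Uhat : Matrix (Fin m) (Fin k) ℂ) (Vhat : Matrix (Fin n) (Fin k) ℂ)
    (hU : Uhatᴴ * Uhat = 1) (hV : Vhatᴴ * Vhat = 1)
    (S : ℝ → Matrix (Fin k) (Fin k) ℂ)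
    (Q P : ℝ → Matrix (Fin m) (Fin n) ℝ)
    (hQ : ∀ t, Q t = (Uhat * S t * Vhatᴴ).map Complex.re)
    (hP : ∀ t, P t = (Uhat * S t * Vhatᴴ).map Complex.im)
    (ht : t0 ≤ t1)
    (hS : ∀ t ∈ Set.Icc t0 t1, ∀ i j,
      HasDerivAt (fun s => S s i j)
        (((-Complex.I) • (Uhatᴴ *
          ((GQ (Q t, P t)).map Complex.ofReal
            + Complex.I • (GP (Q t, P t)).map Complex.ofReal) * Vhat)) i j) t)
    (Q0 P0 Q1 P1 Qhat1 Phat1 : Matrix (Fin m) (Fin n) ℝ)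
    (Z1 Zhat1 : Matrix (Fin m) (Fin n) ℂ)
    (hZ0 : Uhat * S t0 * Vhatᴴ
      = Q0.map Complex.ofReal + Complex.I • P0.map Complex.ofReal)
    (hZhat1 : Zhat1 = Uhat * S t1 * Vhatᴴ)
    (hQhat1 : Qhat1 = Zhat1.map Complex.re) (hPhat1 : Phat1 = Zhat1.map Complex.im)
    (hZ1 : Z1 = Q1.map Complex.ofReal + Complex.I • P1.map Complex.ofReal)
    (htrunc : cfrobNorm (Z1 - Zhat1) ≤ ϑ)
    (hϑ : 0 ≤ ϑ)
    (β : ℝ)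
    (hβ : β = ⨆ τ : Set.Icc (0:ℝ) 1,
      Real.sqrt
        (frobNorm (GQ ((τ : ℝ) • Q1 + (1 - (τ : ℝ)) • Qhat1,
            (τ : ℝ) • P1 + (1 - (τ : ℝ)) • Phat1)) ^ 2
          + frobNorm (GP ((τ : ℝ) • Q1 + (1 - (τ : ℝ)) • Qhat1,
            (τ : ℝ) • P1 + (1 - (τ : ℝ)) • Phat1)) ^ 2)) :
    |H (Q1, P1) - H (Q0, P0)| ≤ β * ϑ :=
  rank_adaptive_hamiltonian_preservation_general H GQ GP hH hGQ hGP hgrad Uhat Vhat S Q P hQ hP ht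
    hS Q0 P0 Q1 P1 Qhat1 Phat1 Z1 Zhat1 hZ0 hZhat1 hQhat1 hPhat1 hZ1 htrunc β hβ
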